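/- Let v_1, …, v_n be positive integers with v_1 + ⋯ + v_n = 2k for an integer k ≥ 1. Construct the hedonic game with agents N = {a_1, …, a_n} ∪ {R, B} ∪ Grn, where Grn = {g_1, g_2} is a set of two green agents and all parts are pairwise disjoint. Let M_G be the set of coalitions consisting of exactly one green agent together with a nonempty set of agents a_j whose values v_j sum to k. Preferences: each a_j is indifferent among all coalitions of M_G containing a_j, strictly prefers each of them to {a_j}, and strictly prefers {a_j} to every other coalition containing a_j; the agents R, B, g_1, g_2 have the trap-gadget preferences with respect to M_G, with each green agent indifferent among the coalitions of M_G containing it. Then the game admits an individually stable outcome if and only if there is a partition of {1, …, n} into two sets I_1 and I_2 with ∑_{j ∈ I_1} v_j = ∑_{j ∈ I_2} v_j = k; the same equivalence holds for Nash stable outcomes. -/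
import Mathlib


/-- Strict preference derived from a weak preference relation. -/
def SPref {α : Type*} (pref : α → Finset α → Finset α → Prop)
    (i : α) (X Y : Finset α) : Prop :=
  pref i X Y ∧ ¬ pref i Y X

/-- An outcome: a partition of the agents into nonempty coalitions. -/
def IsOutcome {α : Type*} [Fintype α] [DecidableEq α] (Part : Finset (Finset α)) : Prop :=
  (∀ C ∈ Part, C.Nonempty) ∧
  (∀ C ∈ Part, ∀ D ∈ Part, C ≠ D → Disjoint C D) ∧
  (∀ i : α, ∃ C ∈ Part, i ∈ C)

/-- Nash stability. -/
def NashStable {α : Type*} [DecidableEq α] (pref : α → Finset α → Finset α → Prop)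
    (Part : Finset (Finset α)) : Prop :=
  ∀ i : α, ∀ Ci ∈ Part, i ∈ Ci →
    ∀ C : Finset α, (C ∈ Part ∨ C = ∅) → C ≠ Ci →
      ¬ SPref pref i (insert i C) Ci

/-- Individual stability. -/
def IndStable {α : Type*} [DecidableEq α] (pref : α → Finset α → Finset α → Prop)
    (Part : Finset (Finset α)) : Prop :=
  ∀ i : α, ∀ Ci ∈ Part, i ∈ Ci →
    ∀ C : Finset α, (C ∈ Part ∨ C = ∅) → C ≠ Ci →
      ¬ (SPref pref i (insert i C) Ci ∧ ∀ j ∈ C, pref j (insert i C) C)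

/-- Trap-gadget preferences of the agents `R`, `B` and the green agents `Grn`
with respect to a collection `MG` of coalitions. -/
structure TrapGadget {α : Type*} [DecidableEq α]
    (pref : α → Finset α → Finset α → Prop)
    (R B : α) (Grn : Finset α) (MG : Set (Finset α)) : Prop where
  /-- R strictly prefers {R,B} to every other coalition containing R. -/
  R_top : ∀ C : Finset α, R ∈ C → C ≠ {R, B} → SPref pref R {R, B} C
  /-- Among coalitions {R} ∪ S with ∅ ≠ S ⊆ Grn, R strictly prefers those with more
  green agents. -/
  R_green_mono : ∀ S T : Finset α, S.Nonempty → S ⊆ Grn → T.Nonempty → T ⊆ Grn →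
    T.card < S.card → SPref pref R (insert R S) (insert R T)
  /-- R strictly prefers each coalition {R} ∪ S with ∅ ≠ S ⊆ Grn to {R}. -/
  R_green_over_alone : ∀ S : Finset α, S.Nonempty → S ⊆ Grn →
    SPref pref R (insert R S) {R}
  /-- R strictly prefers {R} to every coalition containing R not of the above forms. -/
  R_alone_over_rest : ∀ C : Finset α, R ∈ C → C ≠ {R, B} → C ≠ {R} →
    (¬ ∃ S : Finset α, S.Nonempty ∧ S ⊆ Grn ∧ C = insert R S) →
    SPref pref R {R} C
  /-- Among coalitions {B} ∪ S with ∅ ≠ S ⊆ Grn, B strictly prefers those with more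
  green agents. -/
  B_green_mono : ∀ S T : Finset α, S.Nonempty → S ⊆ Grn → T.Nonempty → T ⊆ Grn →
    T.card < S.card → SPref pref B (insert B S) (insert B T)
  /-- B strictly prefers each coalition {B} ∪ S with ∅ ≠ S ⊆ Grn to {R,B}. -/
  B_green_over_RB : ∀ S : Finset α, S.Nonempty → S ⊆ Grn →
    SPref pref B (insert B S) {R, B}
  /-- B strictly prefers {R,B} to {B}. -/
  B_RB_over_alone : SPref pref B {R, B} {B}
  /-- B strictly prefers {B} to every other coalition containing B. -/
  B_alone_over_rest : ∀ C : Finset α, B ∈ C → C ≠ {R, B} → C ≠ {B} →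
    (¬ ∃ S : Finset α, S.Nonempty ∧ S ⊆ Grn ∧ C = insert B S) →
    SPref pref B {B} C
  /-- Every green agent strictly prefers every coalition of MG containing it to every
  coalition containing it that is not in MG. -/
  G_MG_top : ∀ g ∈ Grn, ∀ C ∈ MG, g ∈ C → ∀ C' : Finset α, g ∈ C' → C' ∉ MG →
    SPref pref g C C'
  /-- Among non-MG coalitions, a green agent g strictly prefers coalitions of the form
  {R} ∪ S with g ∈ S ⊆ Grn to coalitions of the form {B} ∪ S' with g ∈ S' ⊆ Grn. -/
  G_R_over_B : ∀ g ∈ Grn, ∀ S T : Finset α, g ∈ S → S ⊆ Grn → g ∈ T → T ⊆ Grn →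
    insert R S ∉ MG → insert B T ∉ MG → SPref pref g (insert R S) (insert B T)
  /-- ... strictly prefers those to coalitions S'' ⊆ Grn with g ∈ S''. -/
  G_B_over_G : ∀ g ∈ Grn, ∀ S T : Finset α, g ∈ S → S ⊆ Grn → g ∈ T → T ⊆ Grn →
    insert B S ∉ MG → T ∉ MG → SPref pref g (insert B S) T
  /-- ... and strictly prefers those to all remaining coalitions containing g. -/
  G_G_over_rest : ∀ g ∈ Grn, ∀ S C : Finset α, g ∈ S → S ⊆ Grn → S ∉ MG →
    g ∈ C → C ∉ MG →
    (¬ ∃ T : Finset α, g ∈ T ∧ T ⊆ Grn ∧ (C = T ∨ C = insert R T ∨ C = insert B T)) →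
    SPref pref g S C
  /-- Within the form {R} ∪ S, a green agent strictly prefers coalitions with more
  green agents. -/
  G_R_mono : ∀ g ∈ Grn, ∀ S T : Finset α, g ∈ S → S ⊆ Grn → g ∈ T → T ⊆ Grn →
    insert R S ∉ MG → insert R T ∉ MG → T.card < S.card →
    SPref pref g (insert R S) (insert R T)
  /-- Within the form {B} ∪ S', a green agent strictly prefers coalitions with more
  green agents. -/
  G_B_mono : ∀ g ∈ Grn, ∀ S T : Finset α, g ∈ S → S ⊆ Grn → g ∈ T → T ⊆ Grn →
    insert B S ∉ MG → insert B T ∉ MG → T.card < S.card →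
    SPref pref g (insert B S) (insert B T)
  /-- Within the form S'', a green agent strictly prefers coalitions with more
  green agents. -/
  G_G_mono : ∀ g ∈ Grn, ∀ S T : Finset α, g ∈ S → S ⊆ Grn → g ∈ T → T ⊆ Grn →
    S ∉ MG → T ∉ MG → T.card < S.card → SPref pref g S T

/-- The agents: `a_1, …, a_n`, two green agents, and the agents R and B. -/
abbrev PtnAgent (n : ℕ) := Fin n ⊕ (Fin 2 ⊕ Fin 2)

/-- The green agents. -/
abbrev ptnGrn {n : ℕ} (g : Fin 2) : PtnAgent n := Sum.inr (Sum.inl g)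
/-- The agent R. -/
abbrev ptnR (n : ℕ) : PtnAgent n := Sum.inr (Sum.inr 0)
/-- The agent B. -/
abbrev ptnB (n : ℕ) : PtnAgent n := Sum.inr (Sum.inr 1)

/-- The desirable coalitions: exactly one green agent together with a nonempty set of
normal agents whose values sum to `k`. -/
def ptnMG {n : ℕ} (v : Fin n → ℕ) (k : ℕ) : Set (Finset (PtnAgent n)) :=
  {C | ∃ g : Fin 2, ∃ J : Finset (Fin n), J.Nonempty ∧ (∑ j ∈ J, v j) = k ∧
    C = insert (ptnGrn g) (J.image Sum.inl)}

section Helpers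

lemma sprefTrans {α : Type*} {pref : α → Finset α → Finset α → Prop}
    (htrans : ∀ (a : α) (X Y Z : Finset α), pref a X Y → pref a Y Z → pref a X Z)
    {i : α} {X Y Z : Finset α} (h1 : SPref pref i X Y) (h2 : SPref pref i Y Z) :
    SPref pref i X Z :=
  ⟨htrans _ _ _ _ h1.1 h2.1, fun h => h2.2 (htrans _ _ _ _ h h1.1)⟩

lemma subset_pair {α : Type*} [DecidableEq α] {x y : α} {S : Finset α} (h : S ⊆ {x, y})
    (hne : S.Nonempty) : S = {x} ∨ S = {y} ∨ S = {x, y} := by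
  by_cases hx : x ∈ S <;> by_cases hy : y ∈ S
  · refine Or.inr (Or.inr (Finset.Subset.antisymm h ?_))
    intro a ha
    rcases Finset.mem_insert.1 ha with rfl | ha
    · exact hx
    · rcases Finset.mem_singleton.1 ha with rfl; exact hy
  · refine Or.inl (Finset.Subset.antisymm ?_ (Finset.singleton_subset_iff.2 hx))
    intro a ha
    rcases Finset.mem_insert.1 (h ha) with rfl | ha'
    · exact Finset.mem_singleton_self _
    · rcases Finset.mem_singleton.1 ha' with rfl; exact absurd ha hy
  · refine Or.inr (Or.inl (Finset.Subset.antisymm ?_ (Finset.singleton_subset_iff.2 hy)))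
    intro a ha
    rcases Finset.mem_insert.1 (h ha) with rfl | ha'
    · exact absurd ha hx
    · exact ha'
  · obtain ⟨a, ha⟩ := hne
    rcases Finset.mem_insert.1 (h ha) with rfl | ha'
    · exact absurd ha hx
    · rcases Finset.mem_singleton.1 ha' with rfl; exact absurd ha hy

lemma fin2cases : ∀ r : Fin 2, r = 0 ∨ r = 1 := by decide

variable {n : ℕ}

lemma mem_grnSet {x : PtnAgent n} :
    x ∈ Finset.univ.image (fun g : Fin 2 => ptnGrn (n := n) g) ↔ ∃ g, x = ptnGrn g := by
  simp [eq_comm]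

lemma grnSet_eq :
    (Finset.univ.image (fun g : Fin 2 => ptnGrn (n := n) g)) = {ptnGrn 0, ptnGrn 1} := by
  ext x
  simp [Fin.exists_fin_two, eq_comm, Finset.mem_insert]

lemma MG_has_inl {v : Fin n → ℕ} {k : ℕ} {C : Finset (PtnAgent n)} (h : C ∈ ptnMG v k) :
    ∃ j : Fin n, Sum.inl j ∈ C := by
  obtain ⟨g, J, ⟨j, hj⟩, _, rfl⟩ := h
  exact ⟨j, Finset.mem_insert_of_mem (Finset.mem_image_of_mem _ hj)⟩

lemma not_MG_of_no_inl {v : Fin n → ℕ} {k : ℕ} {C : Finset (PtnAgent n)}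
    (h : ∀ j : Fin n, Sum.inl j ∉ C) : C ∉ ptnMG v k :=
  fun hMG => let ⟨j, hj⟩ := MG_has_inl hMG; h j hj

lemma inl_notMem_of_subset_grn {S : Finset (PtnAgent n)}
    (hS : S ⊆ Finset.univ.image (fun g : Fin 2 => ptnGrn (n := n) g)) (j : Fin n) :
    Sum.inl j ∉ S := by
  intro h
  obtain ⟨g, hg⟩ := mem_grnSet.1 (hS h)
  simp at hg

lemma grn_subset_not_MG {v : Fin n → ℕ} {k : ℕ} {S : Finset (PtnAgent n)}
    (hS : S ⊆ Finset.univ.image (fun g : Fin 2 => ptnGrn (n := n) g)) : S ∉ ptnMG v k :=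
  not_MG_of_no_inl (inl_notMem_of_subset_grn hS)

lemma insertR_grn_not_MG {v : Fin n → ℕ} {k : ℕ} {S : Finset (PtnAgent n)}
    (hS : S ⊆ Finset.univ.image (fun g : Fin 2 => ptnGrn (n := n) g)) :
    insert (ptnR n) S ∉ ptnMG v k := by
  apply not_MG_of_no_inl
  intro j hj
  rcases Finset.mem_insert.1 hj with h | h
  · simp at h
  · exact inl_notMem_of_subset_grn hS j h

lemma insertB_grn_not_MG {v : Fin n → ℕ} {k : ℕ} {S : Finset (PtnAgent n)}
    (hS : S ⊆ Finset.univ.image (fun g : Fin 2 => ptnGrn (n := n) g)) :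
    insert (ptnB n) S ∉ ptnMG v k := by
  apply not_MG_of_no_inl
  intro j hj
  rcases Finset.mem_insert.1 hj with h | h
  · simp at h
  · exact inl_notMem_of_subset_grn hS j h

lemma R_notMem_MG {v : Fin n → ℕ} {k : ℕ} {C : Finset (PtnAgent n)} (h : C ∈ ptnMG v k) :
    ptnR n ∉ C := by
  obtain ⟨g, J, _, _, rfl⟩ := h
  simp

lemma B_notMem_MG {v : Fin n → ℕ} {k : ℕ} {C : Finset (PtnAgent n)} (h : C ∈ ptnMG v k) :
    ptnB n ∉ C := by
  obtain ⟨g, J, _, _, rfl⟩ := h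
  simp

open Classical in
lemma MG_filter_sum {v : Fin n → ℕ} {k : ℕ} {C : Finset (PtnAgent n)} (h : C ∈ ptnMG v k) :
    ∑ j ∈ Finset.univ.filter (fun j => Sum.inl j ∈ C), v j = k := by
  obtain ⟨g, J, _, hsum, hC⟩ := h
  have hJ : Finset.univ.filter (fun j => Sum.inl j ∈ C) = J := by
    ext j; simp [hC]
  rw [hJ]; exact hsum

end Helpers
/-- The hedonic game (with trap gadget) built from positive integers
`v_1, …, v_n` summing to `2k` admits an individually stable outcome iff the values can be
partitioned into two halves each summing to `k`; the same holds for Nash stability. -/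
theorem partition_reduction_trap (n k : ℕ) (hk : 1 ≤ k)
    (v : Fin n → ℕ) (hv : ∀ j, 0 < v j) (hsum : ∑ j, v j = 2 * k)
    (pref : PtnAgent n → Finset (PtnAgent n) → Finset (PtnAgent n) → Prop)
    (htot : ∀ (a : PtnAgent n) (X Y : Finset (PtnAgent n)),
      a ∈ X → a ∈ Y → pref a X Y ∨ pref a Y X)
    (htrans : ∀ (a : PtnAgent n) (X Y Z : Finset (PtnAgent n)),
      pref a X Y → pref a Y Z → pref a X Z)
    -- each normal agent aⱼ is indifferent among the coalitions of MG containing it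
    (hN_indiff : ∀ (j : Fin n) (C C' : Finset (PtnAgent n)),
      C ∈ ptnMG v k → C' ∈ ptnMG v k → Sum.inl j ∈ C → Sum.inl j ∈ C' →
      pref (Sum.inl j) C C')
    -- it strictly prefers each of them to being alone
    (hN_over_alone : ∀ (j : Fin n) (C : Finset (PtnAgent n)),
      C ∈ ptnMG v k → Sum.inl j ∈ C → SPref pref (Sum.inl j) C {Sum.inl j})
    -- and strictly prefers being alone to every other coalition containing it
    (hN_alone_over_rest : ∀ (j : Fin n) (C : Finset (PtnAgent n)),
      Sum.inl j ∈ C → C ∉ ptnMG v k → C ≠ {Sum.inl j} →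
      SPref pref (Sum.inl j) {Sum.inl j} C)
    -- R, B, g₁, g₂ have the trap-gadget preferences w.r.t. MG
    (htrap : TrapGadget pref (ptnR n) (ptnB n)
      (Finset.univ.image (fun g : Fin 2 => ptnGrn (n := n) g)) (ptnMG v k))
    -- each green agent is indifferent among the coalitions of MG containing it
    (hG_indiff : ∀ (g : Fin 2) (C C' : Finset (PtnAgent n)),
      C ∈ ptnMG v k → C' ∈ ptnMG v k → ptnGrn g ∈ C → ptnGrn g ∈ C' →
      pref (ptnGrn g) C C') :
    ((∃ Part : Finset (Finset (PtnAgent n)), IsOutcome Part ∧ IndStable pref Part) ↔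
      (∃ I : Finset (Fin n), (∑ j ∈ I, v j) = k ∧ (∑ j ∈ Iᶜ, v j) = k)) ∧
    ((∃ Part : Finset (Finset (PtnAgent n)), IsOutcome Part ∧ NashStable pref Part) ↔
      (∃ I : Finset (Fin n), (∑ j ∈ I, v j) = k ∧ (∑ j ∈ Iᶜ, v j) = k)) := by
  classical
  have NS_imp_IS : ∀ Part : Finset (Finset (PtnAgent n)),
      NashStable pref Part → IndStable pref Part := by
    intro Part h i Ci hCi hiCi C hC hne hcon
    exact h i Ci hCi hiCi C hC hne hcon.1
  have forward : (∃ Part : Finset (Finset (PtnAgent n)),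
        IsOutcome Part ∧ IndStable pref Part) →
      ∃ I : Finset (Fin n), (∑ j ∈ I, v j) = k ∧ (∑ j ∈ Iᶜ, v j) = k := by
    rintro ⟨Part, ⟨hne', hdisj, hcover⟩, hIS⟩
    choose Pi hPiPart hPimem using hcover
    have uniq : ∀ (C : Finset (PtnAgent n)) (i : PtnAgent n), C ∈ Part → i ∈ C →
        C = Pi i := by
      intro C i hC hi
      by_contra hne2
      exact Finset.disjoint_left.1 (hdisj C hC (Pi i) (hPiPart i) hne2) hi (hPimem i)
    have memPi : ∀ (i i' : PtnAgent n), i' ∈ Pi i → Pi i = Pi i' :=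
      fun i i' h => uniq (Pi i) i' (hPiPart i) h
    by_cases hMGx : ∃ g : Fin 2, Pi (ptnGrn g) ∈ ptnMG v k
    · obtain ⟨g, g', J, hJne, hJsum, _⟩ := hMGx
      refine ⟨J, hJsum, ?_⟩
      have hcompl := Finset.sum_add_sum_compl J v
      rw [hsum, hJsum] at hcompl
      omega
    · push_neg at hMGx
      exfalso
      have hGmem : ∀ g : Fin 2, ptnGrn (n := n) g ∈
          Finset.univ.image (fun g : Fin 2 => ptnGrn (n := n) g) :=
        fun g => mem_grnSet.2 ⟨g, rfl⟩
      have dev0 : ∀ i : PtnAgent n, ¬ SPref pref i {i} (Pi i) := by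
        intro i hspx
        refine hIS i (Pi i) (hPiPart i) (hPimem i) ∅ (Or.inr rfl)
          (Ne.symm (Finset.ne_empty_of_mem (hPimem i))) ⟨?_, ?_⟩
        · exact hspx
        · intro j hj; simp at hj
      have greenForm : ∀ g : Fin 2, ∃ T : Finset (PtnAgent n), ptnGrn g ∈ T ∧
          T ⊆ Finset.univ.image (fun g : Fin 2 => ptnGrn (n := n) g) ∧
          (Pi (ptnGrn g) = T ∨ Pi (ptnGrn g) = insert (ptnR n) T ∨
            Pi (ptnGrn g) = insert (ptnB n) T) := by
        intro g
        by_contra h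
        refine dev0 (ptnGrn g) (htrap.G_G_over_rest (ptnGrn g) (hGmem g) {ptnGrn g}
          (Pi (ptnGrn g)) (Finset.mem_singleton_self _)
          (Finset.singleton_subset_iff.2 (hGmem g))
          (grn_subset_not_MG (Finset.singleton_subset_iff.2 (hGmem g)))
          (hPimem _) (hMGx g) h)
      have RForm : Pi (ptnR n) = {ptnR n, ptnB n} ∨ Pi (ptnR n) = {ptnR n} ∨
          ∃ S : Finset (PtnAgent n), S.Nonempty ∧
            S ⊆ Finset.univ.image (fun g : Fin 2 => ptnGrn (n := n) g) ∧
            Pi (ptnR n) = insert (ptnR n) S := by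
        by_contra h
        push_neg at h
        exact dev0 (ptnR n) (htrap.R_alone_over_rest _ (hPimem _) h.1 h.2.1
          (fun ⟨S, h1, h2, h3⟩ => h.2.2 S h1 h2 h3))
      have BForm : Pi (ptnB n) = {ptnR n, ptnB n} ∨ Pi (ptnB n) = {ptnB n} ∨
          ∃ S : Finset (PtnAgent n), S.Nonempty ∧
            S ⊆ Finset.univ.image (fun g : Fin 2 => ptnGrn (n := n) g) ∧
            Pi (ptnB n) = insert (ptnB n) S := by
        by_contra h
        push_neg at h
        exact dev0 (ptnB n) (htrap.B_alone_over_rest _ (hPimem _) h.1 h.2.1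
          (fun ⟨S, h1, h2, h3⟩ => h.2.2 S h1 h2 h3))
      -- a reusable deviation: B deviates to a purely green coalition T = Pi (grn 0)
      have keyBdev : ∀ T : Finset (PtnAgent n),
          T ⊆ Finset.univ.image (fun g : Fin 2 => ptnGrn (n := n) g) →
          ptnGrn 0 ∈ T → Pi (ptnGrn 0) = T →
          SPref pref (ptnB n) (insert (ptnB n) T) (Pi (ptnB n)) → False := by
        intro T hTG hgT hg0 hspB
        have hCne : Pi (ptnGrn 0) ≠ Pi (ptnB n) := by
          intro h
          have : ptnB n ∈ T := by
            rw [← hg0, h]; exact hPimem (ptnB n)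
          obtain ⟨g', hg'⟩ := mem_grnSet.1 (hTG this)
          simp at hg'
        refine hIS (ptnB n) (Pi (ptnB n)) (hPiPart _) (hPimem _) (Pi (ptnGrn 0))
          (Or.inl (hPiPart _)) hCne ⟨?_, ?_⟩
        · rw [hg0]; exact hspB
        · rw [hg0]
          intro j hj
          obtain ⟨g', rfl⟩ := mem_grnSet.1 (hTG hj)
          exact (htrap.G_B_over_G (ptnGrn g') (hGmem g') T T hj hTG hj hTG
            (insertB_grn_not_MG hTG) (grn_subset_not_MG hTG)).1
      -- the main C2-style deviation
      have keyC2 : ∀ g g' : Fin 2, ptnGrn (n := n) g ≠ ptnGrn (n := n) g' →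
          (Finset.univ.image (fun g : Fin 2 => ptnGrn (n := n) g)
            = {ptnGrn g, ptnGrn g'}) →
          Pi (ptnR n) = insert (ptnR n) {ptnGrn g} → False := by
        intro g g' hnegg hGpair hReq
        have ssub : ({ptnGrn (n := n) g'} : Finset (PtnAgent n)) ⊆
            Finset.univ.image (fun g : Fin 2 => ptnGrn (n := n) g) :=
          Finset.singleton_subset_iff.2 (hGmem g')
        have ssubg : ({ptnGrn (n := n) g} : Finset (PtnAgent n)) ⊆
            Finset.univ.image (fun g : Fin 2 => ptnGrn (n := n) g) :=
          Finset.singleton_subset_iff.2 (hGmem g)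
        have hgmemR : ptnGrn g ∈ Pi (ptnR n) := by
          rw [hReq]; simp
        have eRg : Pi (ptnR n) = Pi (ptnGrn g) := memPi _ _ hgmemR
        have hg'notR : ptnGrn g' ∉ Pi (ptnR n) := by
          rw [hReq]
          intro h
          rcases Finset.mem_insert.1 h with h | h
          · simp at h
          · rcases Finset.mem_singleton.1 h with h
            exact hnegg h.symm
        obtain ⟨T', hg'T, hT'G, hT'case⟩ := greenForm g'
        have hT'sub : T' ⊆ Pi (ptnGrn g') := by
          rcases hT'case with h | h | h
          · rw [h]
          · rw [h]; exact Finset.subset_insert _ _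
          · rw [h]; exact Finset.subset_insert _ _
        have hRnot : ptnR n ∉ Pi (ptnGrn g') := by
          intro hRin
          have e := memPi (ptnGrn g') (ptnR n) hRin
          exact hg'notR (e ▸ hPimem (ptnGrn g'))
        have hgnot : ptnGrn g ∉ Pi (ptnGrn g') := by
          intro hin
          have e := memPi (ptnGrn g') (ptnGrn g) hin
          rw [← eRg] at e
          exact hg'notR (e ▸ hPimem (ptnGrn g'))
        have hT' : T' = {ptnGrn g'} := by
          apply Finset.Subset.antisymm _ (Finset.singleton_subset_iff.2 hg'T)
          intro x hx
          have hxG := hT'G hx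
          rw [hGpair] at hxG
          rcases Finset.mem_insert.1 hxG with rfl | h
          · exact absurd (hT'sub hx) hgnot
          · exact h
        rw [hT'] at hT'case
        -- exclude the R-form
        have hT'case2 : Pi (ptnGrn g') = {ptnGrn g'} ∨
            Pi (ptnGrn g') = insert (ptnB n) {ptnGrn g'} := by
          rcases hT'case with h | h | h
          · exact Or.inl h
          · exact absurd (h ▸ Finset.mem_insert_self _ _) hRnot
          · exact Or.inr h
        set T2 : Finset (PtnAgent n) := {ptnGrn g', ptnGrn g} with hT2
        have hT2G : T2 ⊆ Finset.univ.image (fun g : Fin 2 => ptnGrn (n := n) g) := by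
          intro x hx
          rw [hT2] at hx
          rcases Finset.mem_insert.1 hx with rfl | hx
          · exact hGmem g'
          · rcases Finset.mem_singleton.1 hx with rfl
            exact hGmem g
        have hg'T2 : ptnGrn g' ∈ T2 := by rw [hT2]; simp
        have hgT2 : ptnGrn g ∈ T2 := by rw [hT2]; simp
        have hX : insert (ptnGrn g') (Pi (ptnR n)) = insert (ptnR n) T2 := by
          rw [hReq, Finset.insert_comm, hT2]
        have hcard : ({ptnGrn (n := n) g} : Finset (PtnAgent n)).card < T2.card := by
          rw [hT2, Finset.card_insert_of_notMem (by simpa using hnegg.symm)]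
          simp
        have wel : ∀ j ∈ Pi (ptnR n),
            pref j (insert (ptnGrn g') (Pi (ptnR n))) (Pi (ptnR n)) := by
          intro j hj
          rw [hX, hReq]
          rw [hReq] at hj
          rcases Finset.mem_insert.1 hj with rfl | hj
          · exact (htrap.R_green_mono T2 {ptnGrn g} ⟨_, hg'T2⟩ hT2G
              ⟨_, Finset.mem_singleton_self _⟩ ssubg hcard).1
          · rcases Finset.mem_singleton.1 hj with rfl
            exact (htrap.G_R_mono (ptnGrn g) (hGmem g) T2 {ptnGrn g} hgT2 hT2G
              (Finset.mem_singleton_self _) ssubg (insertR_grn_not_MG hT2G)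
              (insertR_grn_not_MG ssubg) hcard).1
        have hCne : Pi (ptnR n) ≠ Pi (ptnGrn g') := by
          intro h
          exact hRnot (h ▸ hPimem (ptnR n))
        refine hIS (ptnGrn g') (Pi (ptnGrn g')) (hPiPart _) (hPimem _) (Pi (ptnR n))
          (Or.inl (hPiPart _)) hCne ⟨?_, wel⟩
        rw [hX]
        rcases hT'case2 with h | h <;> rw [h]
        · exact sprefTrans htrans
            (htrap.G_R_over_B (ptnGrn g') (hGmem g') T2 {ptnGrn g'} hg'T2 hT2G
              (Finset.mem_singleton_self _) ssub (insertR_grn_not_MG hT2G)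
              (insertB_grn_not_MG ssub))
            (htrap.G_B_over_G (ptnGrn g') (hGmem g') {ptnGrn g'} {ptnGrn g'}
              (Finset.mem_singleton_self _) ssub (Finset.mem_singleton_self _) ssub
              (insertB_grn_not_MG ssub) (grn_subset_not_MG ssub))
        · exact htrap.G_R_over_B (ptnGrn g') (hGmem g') T2 {ptnGrn g'} hg'T2 hT2G
            (Finset.mem_singleton_self _) ssub (insertR_grn_not_MG hT2G)
            (insertB_grn_not_MG ssub)
      -- now the case analysis on Pi R
      rcases RForm with hA | hB' | ⟨S, hSne, hSG, hReq⟩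
      · -- Pi R = {R, B}
        have hBco : Pi (ptnB n) = {ptnR n, ptnB n} := by
          have e := memPi (ptnR n) (ptnB n) (by rw [hA]; simp)
          rw [← e]; exact hA
        obtain ⟨T, hgT, hTG, hTcase⟩ := greenForm 0
        have hRnot : ptnR n ∉ Pi (ptnGrn 0) := by
          intro hRin
          have e := memPi (ptnGrn 0) (ptnR n) hRin
          have hm := hPimem (ptnGrn 0)
          rw [e, hA] at hm
          simp at hm
        have hBnot : ptnB n ∉ Pi (ptnGrn 0) := by
          intro hBin
          have e := memPi (ptnGrn 0) (ptnB n) hBin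
          have hm := hPimem (ptnGrn 0)
          rw [e, hBco] at hm
          simp at hm
        have hg0 : Pi (ptnGrn 0) = T := by
          rcases hTcase with h | h | h
          · exact h
          · exact absurd (h ▸ Finset.mem_insert_self _ _) hRnot
          · exact absurd (h ▸ Finset.mem_insert_self _ _) hBnot
        refine keyBdev T hTG hgT hg0 ?_
        rw [hBco]
        exact htrap.B_green_over_RB T ⟨_, hgT⟩ hTG
      · -- Pi R = {R}
        rcases BForm with hBc | hBc | ⟨S, hSne, hSG, hBc⟩
        · -- Pi B = {R,B} : impossible
          have e := memPi (ptnB n) (ptnR n) (by rw [hBc]; simp)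
          rw [hBc, hB'] at e
          have : ptnB n ∈ ({ptnR n} : Finset (PtnAgent n)) := by
            rw [← e]; simp
          simp at this
        · -- Pi B = {B}
          obtain ⟨T, hgT, hTG, hTcase⟩ := greenForm 0
          have hRnot : ptnR n ∉ Pi (ptnGrn 0) := by
            intro hRin
            have e := memPi (ptnGrn 0) (ptnR n) hRin
            have hm := hPimem (ptnGrn 0)
            rw [e, hB'] at hm
            simp at hm
          have hBnot : ptnB n ∉ Pi (ptnGrn 0) := by
            intro hBin
            have e := memPi (ptnGrn 0) (ptnB n) hBin
            have hm := hPimem (ptnGrn 0)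
            rw [e, hBc] at hm
            simp at hm
          have hg0 : Pi (ptnGrn 0) = T := by
            rcases hTcase with h | h | h
            · exact h
            · exact absurd (h ▸ Finset.mem_insert_self _ _) hRnot
            · exact absurd (h ▸ Finset.mem_insert_self _ _) hBnot
          refine keyBdev T hTG hgT hg0 ?_
          rw [hBc]
          exact sprefTrans htrans (htrap.B_green_over_RB T ⟨_, hgT⟩ hTG)
            htrap.B_RB_over_alone
        · -- Pi B = insert B S
          obtain ⟨x, hx⟩ := hSne
          obtain ⟨g, rfl⟩ := mem_grnSet.1 (hSG hx)
          have hgB : ptnGrn g ∈ Pi (ptnB n) := by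
            rw [hBc]; exact Finset.mem_insert_of_mem hx
          have eBg : Pi (ptnB n) = Pi (ptnGrn g) := memPi _ _ hgB
          have ssubg : ({ptnGrn (n := n) g} : Finset (PtnAgent n)) ⊆
              Finset.univ.image (fun g : Fin 2 => ptnGrn (n := n) g) :=
            Finset.singleton_subset_iff.2 (hGmem g)
          have hpair : insert (ptnGrn (n := n) g) ({ptnR n} : Finset (PtnAgent n))
              = insert (ptnR n) {ptnGrn g} := Finset.pair_comm _ _
          have hCne : Pi (ptnR n) ≠ Pi (ptnGrn g) := by
            intro h
            have : ptnR n ∈ Pi (ptnGrn g) := h ▸ hPimem (ptnR n)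
            rw [← eBg, hBc] at this
            rcases Finset.mem_insert.1 this with h' | h'
            · simp at h'
            · obtain ⟨g', hg'⟩ := mem_grnSet.1 (hSG h')
              simp at hg'
          refine hIS (ptnGrn g) (Pi (ptnGrn g)) (hPiPart _) (hPimem _) (Pi (ptnR n))
            (Or.inl (hPiPart _)) hCne ⟨?_, ?_⟩
          · rw [hB', hpair, ← eBg, hBc]
            exact htrap.G_R_over_B (ptnGrn g) (hGmem g) {ptnGrn g} S
              (Finset.mem_singleton_self _) ssubg hx hSG
              (insertR_grn_not_MG ssubg) (insertB_grn_not_MG hSG)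
          · intro j hj
            rw [hB'] at hj ⊢
            rcases Finset.mem_singleton.1 hj with rfl
            rw [hpair]
            exact (htrap.R_green_over_alone {ptnGrn g}
              ⟨_, Finset.mem_singleton_self _⟩ ssubg).1
      · -- Pi R = insert R S
        rw [grnSet_eq] at hSG
        rcases subset_pair hSG hSne with rfl | rfl | rfl
        · exact keyC2 0 1 (by simp) grnSet_eq hReq
        · exact keyC2 1 0 (by simp)
            (grnSet_eq.trans (Finset.pair_comm _ _)) hReq
        · -- S = {grn 0, grn 1} : both greens with R
          have h0R : ptnGrn 0 ∈ Pi (ptnR n) := by rw [hReq]; simp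
          have h1R : ptnGrn 1 ∈ Pi (ptnR n) := by rw [hReq]; simp
          have hBalone : Pi (ptnB n) = {ptnB n} := by
            rcases BForm with hBc | hBc | ⟨S', hS'ne, hS'G, hBc⟩
            · exfalso
              have e := memPi (ptnB n) (ptnR n) (by rw [hBc]; simp)
              have : ptnB n ∈ Pi (ptnR n) := by
                rw [← e]; exact hPimem (ptnB n)
              rw [hReq] at this
              rcases Finset.mem_insert.1 this with h' | h'
              · simp at h'
              · simp [Finset.mem_insert] at h'
            · exact hBc
            · exfalso
              obtain ⟨x, hx⟩ := hS'ne
              obtain ⟨g, rfl⟩ := mem_grnSet.1 (hS'G hx)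
              have hgB : ptnGrn g ∈ Pi (ptnB n) := by
                rw [hBc]; exact Finset.mem_insert_of_mem hx
              have hgR : ptnGrn g ∈ Pi (ptnR n) := by
                rw [hReq]
                rcases fin2cases g with rfl | rfl <;> simp
              have e1 := memPi (ptnB n) (ptnGrn g) hgB
              have e2 := memPi (ptnR n) (ptnGrn g) hgR
              have : ptnB n ∈ Pi (ptnR n) := by
                rw [e2, ← e1]; exact hPimem (ptnB n)
              rw [hReq] at this
              rcases Finset.mem_insert.1 this with h' | h'
              · simp at h'
              · simp [Finset.mem_insert] at h'
          have hCne : Pi (ptnB n) ≠ Pi (ptnR n) := by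
            intro h
            have : ptnR n ∈ Pi (ptnB n) := h.symm ▸ hPimem (ptnR n)
            rw [hBalone] at this
            simp at this
          refine hIS (ptnR n) (Pi (ptnR n)) (hPiPart _) (hPimem _) (Pi (ptnB n))
            (Or.inl (hPiPart _)) hCne ⟨?_, ?_⟩
          · rw [hBalone, hReq]
            refine htrap.R_top _ (Finset.mem_insert_self _ _) ?_
            intro h
            have : ptnGrn (n := n) 0 ∈ ({ptnR n, ptnB n} : Finset (PtnAgent n)) := by
              rw [← h]; simp
            simp at this
          · intro j hj
            rw [hBalone] at hj ⊢
            rcases Finset.mem_singleton.1 hj with rfl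
            exact htrap.B_RB_over_alone.1

  have backward : (∃ I : Finset (Fin n), (∑ j ∈ I, v j) = k ∧ (∑ j ∈ Iᶜ, v j) = k) →
      ∃ Part : Finset (Finset (PtnAgent n)), IsOutcome Part ∧ NashStable pref Part := by
    rintro ⟨I, hI1, hI2⟩
    have hIne : I.Nonempty := by
      rcases I.eq_empty_or_nonempty with rfl | h
      · simp at hI1; omega
      · exact h
    have hIcne : Iᶜ.Nonempty := by
      rcases Iᶜ.eq_empty_or_nonempty with h | h
      · rw [h, Finset.sum_empty] at hI2; omega
      · exact h
    set P1 : Finset (PtnAgent n) := insert (ptnGrn 0) (I.image Sum.inl) with hP1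
    set P2 : Finset (PtnAgent n) := insert (ptnGrn 1) (Iᶜ.image Sum.inl) with hP2
    set P3 : Finset (PtnAgent n) := {ptnR n, ptnB n} with hP3
    have hP1MG : P1 ∈ ptnMG v k := ⟨0, I, hIne, hI1, rfl⟩
    have hP2MG : P2 ∈ ptnMG v k := ⟨1, Iᶜ, hIcne, hI2, rfl⟩
    have prefRefl : ∀ (a : PtnAgent n) (X : Finset (PtnAgent n)), a ∈ X → pref a X X :=
      fun a X h => (htot a X X h h).elim id id
    have N_top : ∀ (j : Fin n) (Cj X : Finset (PtnAgent n)), Cj ∈ ptnMG v k →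
        Sum.inl j ∈ Cj → Sum.inl j ∈ X → pref (Sum.inl j) Cj X := by
      intro j Cj X hCj hjC hjX
      by_cases hX : X ∈ ptnMG v k
      · exact hN_indiff j Cj X hCj hX hjC hjX
      by_cases hX2 : X = {Sum.inl j}
      · rw [hX2]; exact (hN_over_alone j Cj hCj hjC).1
      · exact htrans _ _ _ _ (hN_over_alone j Cj hCj hjC).1
          (hN_alone_over_rest j X hjX hX hX2).1
    have G_top : ∀ (g : Fin 2) (Cg X : Finset (PtnAgent n)), Cg ∈ ptnMG v k →
        ptnGrn g ∈ Cg → ptnGrn g ∈ X → pref (ptnGrn g) Cg X := by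
      intro g Cg X hCg hgC hgX
      by_cases hX : X ∈ ptnMG v k
      · exact hG_indiff g Cg X hCg hX hgC hgX
      · exact (htrap.G_MG_top (ptnGrn g) (mem_grnSet.2 ⟨g, rfl⟩) Cg hCg hgC X hgX hX).1
    have B_top_here : ∀ X : Finset (PtnAgent n), ptnB n ∈ X →
        (∃ j : Fin n, Sum.inl j ∈ X) → pref (ptnB n) {ptnR n, ptnB n} X := by
      rintro X hBX ⟨j, hjX⟩
      have h1 : X ≠ {ptnR n, ptnB n} := by
        rintro rfl; simp [Finset.mem_insert] at hjX
      have h2 : X ≠ {ptnB n} := by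
        rintro rfl; simp at hjX
      have h3 : ¬ ∃ S : Finset (PtnAgent n), S.Nonempty ∧
          S ⊆ Finset.univ.image (fun g : Fin 2 => ptnGrn (n := n) g) ∧
          X = insert (ptnB n) S := by
        rintro ⟨S, _, hSG, rfl⟩
        rcases Finset.mem_insert.1 hjX with h | h
        · simp at h
        · exact inl_notMem_of_subset_grn hSG j h
      exact (sprefTrans htrans htrap.B_RB_over_alone
        (htrap.B_alone_over_rest X hBX h1 h2 h3)).1
    have d12 : Disjoint P1 P2 := by
      rw [Finset.disjoint_left]
      intro a ha hb
      rw [hP1] at ha; rw [hP2] at hb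
      rcases Finset.mem_insert.1 ha with rfl | ha
      · rcases Finset.mem_insert.1 hb with h | h
        · simp at h
        · obtain ⟨j, _, hj⟩ := Finset.mem_image.1 h; simp at hj
      · obtain ⟨j, hjI, rfl⟩ := Finset.mem_image.1 ha
        rcases Finset.mem_insert.1 hb with h | h
        · simp at h
        · obtain ⟨j', hj', hjj⟩ := Finset.mem_image.1 h
          cases Sum.inl.inj hjj
          exact (Finset.mem_compl.1 hj') hjI
    have d13 : Disjoint P1 P3 := by
      rw [Finset.disjoint_right]
      intro a ha
      rw [hP3] at ha
      rcases Finset.mem_insert.1 ha with rfl | ha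
      · exact R_notMem_MG hP1MG
      · rcases Finset.mem_singleton.1 ha with rfl
        exact B_notMem_MG hP1MG
    have d23 : Disjoint P2 P3 := by
      rw [Finset.disjoint_right]
      intro a ha
      rw [hP3] at ha
      rcases Finset.mem_insert.1 ha with rfl | ha
      · exact R_notMem_MG hP2MG
      · rcases Finset.mem_singleton.1 ha with rfl
        exact B_notMem_MG hP2MG
    refine ⟨{P1, P2, P3}, ⟨?_, ?_, ?_⟩, ?_⟩
    · intro C hC
      simp only [Finset.mem_insert, Finset.mem_singleton] at hC
      rcases hC with rfl | rfl | rfl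
      · exact ⟨_, Finset.mem_insert_self _ _⟩
      · exact ⟨_, Finset.mem_insert_self _ _⟩
      · exact ⟨_, Finset.mem_insert_self _ _⟩
    · intro C hC D hD hne
      simp only [Finset.mem_insert, Finset.mem_singleton] at hC hD
      rcases hC with rfl | rfl | rfl <;> rcases hD with rfl | rfl | rfl <;>
        first
          | exact absurd rfl hne
          | exact d12 | exact d12.symm | exact d13 | exact d13.symm
          | exact d23 | exact d23.symm
    · intro i
      rcases i with j | gb
      · by_cases hj : j ∈ I
        · exact ⟨P1, by simp, by
            rw [hP1]; exact Finset.mem_insert_of_mem (Finset.mem_image_of_mem _ hj)⟩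
        · exact ⟨P2, by simp, by
            rw [hP2]
            exact Finset.mem_insert_of_mem
              (Finset.mem_image_of_mem _ (Finset.mem_compl.2 hj))⟩
      · rcases gb with g | r
        · rcases fin2cases g with rfl | rfl
          · exact ⟨P1, by simp, by rw [hP1]; exact Finset.mem_insert_self _ _⟩
          · exact ⟨P2, by simp, by rw [hP2]; exact Finset.mem_insert_self _ _⟩
        · rcases fin2cases r with rfl | rfl
          · exact ⟨P3, by simp, by rw [hP3]; exact Finset.mem_insert_self _ _⟩
          · exact ⟨P3, by simp, by rw [hP3]; simp⟩
    · intro i Ci hCi hiCi C hC hne hsp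
      simp only [Finset.mem_insert, Finset.mem_singleton] at hCi
      rcases i with j | gb
      · have hCiMG : Ci ∈ ptnMG v k := by
          rcases hCi with rfl | rfl | rfl
          · exact hP1MG
          · exact hP2MG
          · exfalso; rw [hP3] at hiCi; simp at hiCi
        exact hsp.2 (N_top j Ci _ hCiMG hiCi (Finset.mem_insert_self _ _))
      · rcases gb with g | r
        · have hCiMG : Ci ∈ ptnMG v k := by
            rcases hCi with rfl | rfl | rfl
            · exact hP1MG
            · exact hP2MG
            · exfalso; rw [hP3] at hiCi; simp at hiCi
          exact hsp.2 (G_top g Ci _ hCiMG hiCi (Finset.mem_insert_self _ _))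
        · rcases fin2cases r with rfl | rfl
          · -- agent R
            have hCiP3 : Ci = P3 := by
              rcases hCi with rfl | rfl | rfl
              · exact absurd hiCi (R_notMem_MG hP1MG)
              · exact absurd hiCi (R_notMem_MG hP2MG)
              · rfl
            apply hsp.2
            rw [hCiP3, hP3]
            by_cases hX : insert (ptnR n) C = ({ptnR n, ptnB n} : Finset (PtnAgent n))
            · rw [hX]; exact prefRefl _ _ (Finset.mem_insert_self _ _)
            · exact (htrap.R_top _ (Finset.mem_insert_self _ _) hX).1
          · -- agent B
            have hCiP3 : Ci = P3 := by
              rcases hCi with rfl | rfl | rfl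
              · exact absurd hiCi (B_notMem_MG hP1MG)
              · exact absurd hiCi (B_notMem_MG hP2MG)
              · rfl
            apply hsp.2
            rw [hCiP3, hP3]
            rcases hC with hC | rfl
            · simp only [Finset.mem_insert, Finset.mem_singleton] at hC
              rcases hC with rfl | rfl | rfl
              · obtain ⟨j, hj⟩ := MG_has_inl hP1MG
                exact B_top_here _ (Finset.mem_insert_self _ _)
                  ⟨j, Finset.mem_insert_of_mem hj⟩
              · obtain ⟨j, hj⟩ := MG_has_inl hP2MG
                exact B_top_here _ (Finset.mem_insert_self _ _)
                  ⟨j, Finset.mem_insert_of_mem hj⟩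
              · exact absurd hCiP3.symm hne
            · exact htrap.B_RB_over_alone.1
  exact ⟨⟨forward, fun h => by
        obtain ⟨P, h1, h2⟩ := backward h
        exact ⟨P, h1, NS_imp_IS P h2⟩⟩,
      ⟨fun hex => forward ⟨hex.choose, hex.choose_spec.1, NS_imp_IS _ hex.choose_spec.2⟩, backward⟩⟩
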